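/- arXiv:2310.19733 — 2 statements merged into one kernel-verified Lean document; each statement's English description precedes it below -/
import Mathlib

section
/- Let X be a measurable space, Θ a measurable space, and ρ : Θ × Θ → ℝ a nonnegative, symmetric, jointly measurable loss function. Let d ≥ 1, let E_d = {−1,1}^d, and let (P_e)_{e∈E_d} be probability measures on X and (θ_e)_{e∈E_d} elements of Θ. Suppose there exist τ ∈ ℝ and α > 0 such that (i) for all u, v ∈ E_d, ρ(θ_u, θ_v) ≥ 2τ·#{i : uᵢ ≠ vᵢ}, and (ii) for all u, v ∈ E_d and all t ∈ Θ, ρ(θ_u, θ_v) ≤ α·( ρ(θ_u, t) + ρ(θ_v, t) ). For e ∈ E_d and i ∈ {1,…,d}, let ē^i ∈ E_d be the vector obtained from e by flipping the i-th coordinate. Then for every measurable estimator θ̂ : X → Θ, max_{e∈E_d} E_{X∼P_e}[ ρ(θ̂(X), θ_e) ] ≥ (d·τ/(2α))·[ 1 − ( (1/d)·Σ_{i=1}^d 2^{−d}·Σ_{e∈E_d} TV(P_e, P_{ē^i})² )^{1/2} ]. -/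
/-!
Let `ê(x)` be a vertex of the cube minimising `ρ (θ_e, θ̂ x)`. By the quasi-triangle inequality
and the separation hypothesis, `ρ (θ̂ x, θ_e) ≥ (τ/α) · hamming(ê x, e)`, so the risk at `e` is at
least `τ/α` times the expected number of coordinates on which `ê` errs. For each coordinate `i`
and each pair `e`, `ē^i`, the test `ê_i` errs with total probability at least
`1 - TV(P_e, P_{ē^i})` (Le Cam). Averaging over the cube and over `i` bounds the average risk from
below by `(dτ/(2α)) (1 - mean TV)`, and Cauchy–Schwarz bounds the mean TV by the root mean square.
The maximum dominates the average.
-/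

open MeasureTheory

noncomputable def tvDist {X : Type*} [MeasurableSpace X] (P Q : Measure X) : ℝ :=
  ⨆ S : {S : Set X // MeasurableSet S}, |(P S.1).toReal - (Q S.1).toReal|

open Finset ENNReal

section TotalVariation

variable {X : Type*} [MeasurableSpace X] {P Q : Measure X}

lemma tvDist_nonneg : 0 ≤ tvDist P Q :=
  Real.iSup_nonneg fun _ => abs_nonneg _

variable [IsProbabilityMeasure P] [IsProbabilityMeasure Q]

lemma abs_measureReal_sub_le_one (S : Set X) : |P.real S - Q.real S| ≤ 1 := by
  have := measureReal_le_one (μ := P) (s := S)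
  have := measureReal_le_one (μ := Q) (s := S)
  have := measureReal_nonneg (μ := P) (s := S)
  have := measureReal_nonneg (μ := Q) (s := S)
  rw [abs_sub_le_iff]
  constructor <;> linarith

lemma tvDist_le_one : tvDist P Q ≤ 1 :=
  ciSup_le fun S => abs_measureReal_sub_le_one S.1

lemma abs_measureReal_sub_le_tvDist {S : Set X} (hS : MeasurableSet S) :
    |P.real S - Q.real S| ≤ tvDist P Q :=
  le_ciSup (f := fun S : {S : Set X // MeasurableSet S} => |P.real S.1 - Q.real S.1|)
    ⟨1, by rintro _ ⟨S, rfl⟩; exact abs_measureReal_sub_le_one S.1⟩ ⟨S, hS⟩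

/-- Le Cam's bound on the sum of the two error probabilities of the test `A`. -/
lemma ofReal_one_sub_tvDist_le {A : Set X} (hA : MeasurableSet A) :
    ENNReal.ofReal (1 - tvDist P Q) ≤ P Aᶜ + Q A := by
  have hA' := (le_abs_self _).trans (abs_measureReal_sub_le_tvDist (P := P) (Q := Q) hA)
  calc ENNReal.ofReal (1 - tvDist P Q) ≤ ENNReal.ofReal (P.real Aᶜ + Q.real A) := by
        rw [probReal_compl_eq_one_sub hA]
        exact ofReal_le_ofReal (by linarith)
    _ = P Aᶜ + Q A := by
        rw [ofReal_add measureReal_nonneg measureReal_nonneg, ofReal_measureReal, ofReal_measureReal]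

end TotalVariation

theorem Finset.sum_le_card_mul_sqrt_sum_sq_div_card {ι : Type*} (s : Finset ι) (f : ι → ℝ) :
    ∑ i ∈ s, f i ≤ #s * √((∑ i ∈ s, f i ^ 2) / #s) := by
  obtain rfl | hs := s.eq_empty_or_nonempty
  · simp
  rw [← div_le_iff₀' (by positivity)]
  exact (le_abs_self _).trans (Real.abs_le_sqrt sum_div_card_sq_le_sum_sq_div_card)

lemma card_mul_card_mul_one_sub_sqrt_le {ι κ : Type*} [Fintype ι] [Fintype κ] (t : ι → κ → ℝ) :
    (Fintype.card ι * Fintype.card κ) *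
        (1 - √((1 / Fintype.card ι) * ∑ i, (Fintype.card κ : ℝ)⁻¹ * ∑ k, t i k ^ 2)) ≤
      ∑ i, ∑ k, (1 - t i k) := by
  have h := sum_le_card_mul_sqrt_sum_sq_div_card univ fun p : ι × κ => t p.1 p.2
  simp only [card_univ, Fintype.card_prod, Fintype.sum_prod_type, Nat.cast_mul] at h
  have hmean : (1 / Fintype.card ι : ℝ) * ∑ i, (Fintype.card κ : ℝ)⁻¹ * ∑ k, t i k ^ 2 =
      (∑ i, ∑ k, t i k ^ 2) / (Fintype.card ι * Fintype.card κ) := by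
    rw [← mul_sum]
    simp only [div_eq_mul_inv, mul_inv]
    ring
  simp only [hmean, sum_sub_distrib, sum_const, card_univ, nsmul_eq_mul, mul_one]
  linarith

lemma inv_card_mul_sum_le_one {α : Type*} [Fintype α] {f : α → ℝ} (hf : ∀ a, f a ≤ 1) :
    (Fintype.card α : ℝ)⁻¹ * ∑ a, f a ≤ 1 :=
  inv_mul_le_one_of_le₀ ((sum_le_sum fun a _ => hf a).trans_eq (by simp)) (by positivity)

lemma mean_mean_sq_le_one {ι κ : Type*} [Fintype ι] [Fintype κ] {t : ι → κ → ℝ}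
    (ht₀ : ∀ i k, 0 ≤ t i k) (ht₁ : ∀ i k, t i k ≤ 1) :
    (1 / Fintype.card ι : ℝ) * ∑ i, (Fintype.card κ : ℝ)⁻¹ * ∑ k, t i k ^ 2 ≤ 1 := by
  rw [one_div]
  exact inv_card_mul_sum_le_one fun i =>
    inv_card_mul_sum_le_one fun k => pow_le_one₀ (ht₀ i k) (ht₁ i k)

theorem exists_measurable_argmin {X ι : Type*} [MeasurableSpace X] [Finite ι] [Nonempty ι]
    [MeasurableSpace ι] [MeasurableSingletonClass ι] (f : ι → X → ℝ) (hf : ∀ i, Measurable (f i)) :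
    ∃ g : X → ι, Measurable g ∧ ∀ x i, f (g x) x ≤ f i x := by
  have := Fintype.ofFinite ι
  let : LinearOrder ι := LinearOrder.lift' _ (Fintype.equivFin ι).injective
  -- ties are broken by the order of `ι`, which makes the minimiser unique
  let key (x : X) (i : ι) : ℝ ×ₗ ι := toLex (f i x, i)
  choose g hg using fun x => Finite.exists_min (key x)
  have hg_eq (x : X) (j : ι) : g x = j ↔ ∀ i, key x j ≤ key x i :=
    ⟨by rintro rfl; exact hg x, fun h => by
      simpa [key] using congrArg (fun p => (ofLex p).2) (le_antisymm (hg x j) (h (g x)))⟩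
  refine ⟨g, measurable_to_countable' fun j => ?_, fun x i => Prod.Lex.monotone_fst _ _ (hg x i)⟩
  have hpre : g ⁻¹' {j} =
      ⋂ i, ({x | f j x < f i x} ∪ {x | f j x = f i x} ∩ {_x | j ≤ i}) := by
    ext x
    simp [hg_eq, key, Prod.Lex.toLex_le_toLex]
  rw [hpre]
  exact .iInter fun i => (measurableSet_lt (hf j) (hf i)).union
    ((measurableSet_eq_fun (hf j) (hf i)).inter (.const _))

lemma lintegral_hammingDist {X ι β : Type*} [MeasurableSpace X] [Fintype ι] [DecidableEq β]
    [MeasurableSpace β] [MeasurableSingletonClass β] {μ : Measure X} {g : X → ι → β}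
    (hg : Measurable g) (e : ι → β) :
    ∫⁻ x, (hammingDist (g x) e : ℝ≥0∞) ∂μ = ∑ i, μ {x | g x i ≠ e i} := by
  have hmeas (i : ι) : MeasurableSet {x | g x i ≠ e i} :=
    ((measurable_pi_apply i).comp hg (measurableSet_singleton (e i))).compl
  calc ∫⁻ x, (hammingDist (g x) e : ℝ≥0∞) ∂μ
      = ∫⁻ x, ∑ i, {x | g x i ≠ e i}.indicator 1 x ∂μ := by
        congr with x
        simp [hammingDist, card_filter, Set.indicator_apply]
    _ = ∑ i, μ {x | g x i ≠ e i} := by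
        rw [lintegral_finsetSum _ fun i _ => measurable_one.indicator (hmeas i)]
        simp only [lintegral_indicator_one (hmeas _)]

lemma update_not_involutive {ι : Type*} [DecidableEq ι] (i : ι) :
    Function.Involutive fun e : ι → Bool => Function.update e i (!e i) := by
  intro e
  simp

section Assouad

variable {X ι : Type*} [MeasurableSpace X] [Fintype ι] [DecidableEq ι]
  {P : (ι → Bool) → Measure X} [∀ e, IsProbabilityMeasure (P e)]
  {g : X → ι → Bool}

/-- The coordinate test `x ↦ g x i` separates `P e` from its flip at `i` with error at least
`1 - TV`; summing over `e` counts each such pair twice. -/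
lemma sum_ofReal_one_sub_tvDist_update_le (hg : Measurable g) (i : ι) :
    ∑ e, ENNReal.ofReal (1 - tvDist (P e) (P (Function.update e i (!e i)))) ≤
      2 * ∑ e, P e {x | g x i ≠ e i} := by
  set flip := fun e : ι → Bool => Function.update e i (!e i)
  have hmeas (e : ι → Bool) : MeasurableSet {x | g x i ≠ e i} :=
    ((measurable_pi_apply i).comp hg (measurableSet_singleton (e i))).compl
  have hcompl (e : ι → Bool) : {x | g x i ≠ flip e i}ᶜ = {x | g x i ≠ e i} := by
    ext x
    simp only [flip, Set.mem_compl_iff, Set.mem_ofPred_eq, Function.update_self, not_not]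
    cases g x i <;> cases e i <;> decide
  calc ∑ e, ENNReal.ofReal (1 - tvDist (P e) (P (flip e)))
      ≤ ∑ e, (P e {x | g x i ≠ e i} + P (flip e) {x | g x i ≠ flip e i}) :=
        sum_le_sum fun e _ => hcompl e ▸ ofReal_one_sub_tvDist_le (hmeas (flip e))
    _ = 2 * ∑ e, P e {x | g x i ≠ e i} := by
        rw [sum_add_distrib, two_mul]
        congr 1
        exact Equiv.sum_comp (update_not_involutive i).toPerm fun e => P e {x | g x i ≠ e i}

theorem ofReal_sum_sum_one_sub_tvDist_update_le (hg : Measurable g) :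
    ENNReal.ofReal (∑ i, ∑ e, (1 - tvDist (P e) (P (Function.update e i (!e i))))) ≤
      2 * ∑ e, ∫⁻ x, (hammingDist (g x) e : ℝ≥0∞) ∂P e := by
  have hnonneg (e : ι → Bool) (i : ι) : 0 ≤ 1 - tvDist (P e) (P (Function.update e i (!e i))) :=
    sub_nonneg.2 tvDist_le_one
  rw [ofReal_sum_of_nonneg fun i _ => sum_nonneg fun e _ => hnonneg e i]
  simp only [ofReal_sum_of_nonneg fun e _ => hnonneg e _, lintegral_hammingDist hg]
  refine (sum_le_sum fun i _ => sum_ofReal_one_sub_tvDist_update_le hg i).trans_eq ?_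
  rw [← mul_sum, sum_comm]

end Assouad

section Loss

variable {ι Θ β : Type*} [Fintype ι] [DecidableEq β] {ρ : Θ × Θ → ℝ} {θ : (ι → β) → Θ} {τ α : ℝ}

lemma mul_hammingDist_le_of_forall_le (hsymm : ∀ a b, ρ (a, b) = ρ (b, a)) (hα : 0 ≤ α)
    (hsep : ∀ u v, 2 * τ * (hammingDist u v : ℝ) ≤ ρ (θ u, θ v))
    (htri : ∀ u v t, ρ (θ u, θ v) ≤ α * (ρ (θ u, t) + ρ (θ v, t)))
    {t : Θ} {j : ι → β} (hj : ∀ v, ρ (θ j, t) ≤ ρ (θ v, t)) (e : ι → β) :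
    τ * hammingDist j e ≤ α * ρ (t, θ e) := by
  have hsep := hsep j e
  have htri := htri j e t
  have hmin := mul_le_mul_of_nonneg_left (hj e) hα
  rw [hsymm (θ e)] at htri hmin
  linarith

lemma ofReal_div_mul_lintegral_hammingDist_le {X : Type*} [MeasurableSpace X] {μ : Measure X}
    (hsymm : ∀ a b, ρ (a, b) = ρ (b, a)) (hα : 0 < α)
    (hsep : ∀ u v, 2 * τ * (hammingDist u v : ℝ) ≤ ρ (θ u, θ v))
    (htri : ∀ u v t, ρ (θ u, θ v) ≤ α * (ρ (θ u, t) + ρ (θ v, t)))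
    {est : X → Θ} {g : X → ι → β} (hg : ∀ x v, ρ (θ (g x), est x) ≤ ρ (θ v, est x))
    (e : ι → β) :
    ENNReal.ofReal (τ / α) * ∫⁻ x, (hammingDist (g x) e : ℝ≥0∞) ∂μ ≤
      ∫⁻ x, ENNReal.ofReal (ρ (est x, θ e)) ∂μ := by
  rw [← lintegral_const_mul' _ _ ofReal_ne_top]
  refine lintegral_mono fun x => ?_
  rw [← ofReal_natCast, ← ofReal_mul' (Nat.cast_nonneg _)]
  refine ofReal_le_ofReal ?_
  rw [div_mul_eq_mul_div, div_le_iff₀ hα, mul_comm _ α]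
  exact mul_hammingDist_le_of_forall_le hsymm hα.le hsep htri (hg x) e

end Loss

theorem ofReal_mul_sum_sum_one_sub_tvDist_le_sum_lintegral {X Θ ι : Type*} [MeasurableSpace X]
    [MeasurableSpace Θ] [Fintype ι] [DecidableEq ι] {ρ : Θ × Θ → ℝ}
    (hsymm : ∀ a b, ρ (a, b) = ρ (b, a)) (hρ : Measurable ρ) {P : (ι → Bool) → Measure X}
    [∀ e, IsProbabilityMeasure (P e)] {θ : (ι → Bool) → Θ} {τ α : ℝ} (hτ : 0 ≤ τ) (hα : 0 < α)
    (hsep : ∀ u v, 2 * τ * (hammingDist u v : ℝ) ≤ ρ (θ u, θ v))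
    (htri : ∀ u v t, ρ (θ u, θ v) ≤ α * (ρ (θ u, t) + ρ (θ v, t)))
    {est : X → Θ} (hest : Measurable est) :
    ENNReal.ofReal (τ / (2 * α) * ∑ i, ∑ e, (1 - tvDist (P e) (P (Function.update e i (!e i))))) ≤
      ∑ e, ∫⁻ x, ENNReal.ofReal (ρ (est x, θ e)) ∂P e := by
  obtain ⟨g, hg, hmin⟩ := exists_measurable_argmin (fun e x => ρ (θ e, est x))
    fun e => hρ.comp (measurable_const.prodMk hest)
  calc _ ≤ ENNReal.ofReal (τ / (2 * α)) * (2 * ∑ e, ∫⁻ x, (hammingDist (g x) e : ℝ≥0∞) ∂P e) := by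
        rw [ofReal_mul (by positivity)]
        gcongr
        exact ofReal_sum_sum_one_sub_tvDist_update_le hg
    _ = ∑ e, ENNReal.ofReal (τ / α) * ∫⁻ x, (hammingDist (g x) e : ℝ≥0∞) ∂P e := by
        rw [← mul_assoc, ← mul_sum, ← ofReal_ofNat 2, ← ofReal_mul (by positivity)]
        field_simp
    _ ≤ ∑ e, ∫⁻ x, ENNReal.ofReal (ρ (est x, θ e)) ∂P e :=
        sum_le_sum fun e _ => ofReal_div_mul_lintegral_hammingDist_le hsymm hα hsep htri hmin e

theorem assouad_corollary_general {X Θ' : Type*} [MeasurableSpace X] [MeasurableSpace Θ']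
    (ρ : Θ' × Θ' → ℝ) (hρsymm : ∀ a b, ρ (a, b) = ρ (b, a))
    (hρmeas : Measurable ρ)
    (d : ℕ)
    (P : (Fin d → Bool) → Measure X) (hP : ∀ e, IsProbabilityMeasure (P e))
    (θv : (Fin d → Bool) → Θ') (τ α : ℝ) (hα : 0 < α)
    (hsep : ∀ u v : Fin d → Bool,
      2 * τ * ((Finset.univ.filter fun i => u i ≠ v i).card : ℝ) ≤ ρ (θv u, θv v))
    (htri : ∀ (u v : Fin d → Bool) (t : Θ'),
      ρ (θv u, θv v) ≤ α * (ρ (θv u, t) + ρ (θv v, t)))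
    (est : X → Θ') (hest : Measurable est) :
    ∃ e : Fin d → Bool,
      ENNReal.ofReal
          (((d:ℝ) * τ / (2 * α)) *
            (1 - Real.sqrt ((1/(d:ℝ)) * ∑ i : Fin d, ((2:ℝ)^d)⁻¹ *
              ∑ e : Fin d → Bool,
                (tvDist (P e) (P (Function.update e i (!(e i)))))^2))) ≤
        ∫⁻ x, ENNReal.ofReal (ρ (est x, θv e)) ∂(P e) := by
  classical
  set tv : Fin d → (Fin d → Bool) → ℝ := fun i e => tvDist (P e) (P (Function.update e i (!e i)))
  have hcard : (Fintype.card (Fin d → Bool) : ℝ) = 2 ^ d := by simp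
  have hmean := card_mul_card_mul_one_sub_sqrt_le tv
  have hS := mean_mean_sq_le_one (t := tv) (fun _ _ => tvDist_nonneg) fun _ _ => tvDist_le_one
  simp only [hcard, Fintype.card_fin] at hmean hS
  set S := (1 / (d : ℝ)) * ∑ i : Fin d, ((2 : ℝ) ^ d)⁻¹ * ∑ e, tv i e ^ 2
  set B := (d : ℝ) * τ / (2 * α) * (1 - √S)
  rcases le_or_gt τ 0 with hτ | hτ
  · refine ⟨fun _ => true, le_of_eq_of_le (ofReal_of_nonpos ?_) zero_le⟩
    exact mul_nonpos_of_nonpos_of_nonneg (div_nonpos_of_nonpos_of_nonneg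
      (mul_nonpos_of_nonneg_of_nonpos d.cast_nonneg hτ) (by positivity))
      (sub_nonneg.2 (Real.sqrt_le_one.2 hS))
  have hrisk : ∑ _e : Fin d → Bool, ENNReal.ofReal B ≤
      ∑ e, ∫⁻ x, ENNReal.ofReal (ρ (est x, θv e)) ∂(P e) :=
    calc ∑ _e : Fin d → Bool, ENNReal.ofReal B = ENNReal.ofReal (2 ^ d * B) := by
          simp [ofReal_mul, ofReal_pow]
      _ ≤ ENNReal.ofReal (τ / (2 * α) * ∑ i, ∑ e, (1 - tv i e)) := by
          refine ofReal_le_ofReal ?_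
          calc 2 ^ d * B = τ / (2 * α) * (d * 2 ^ d * (1 - √S)) := by ring
            _ ≤ τ / (2 * α) * ∑ i, ∑ e, (1 - tv i e) := by gcongr
      _ ≤ _ := ofReal_mul_sum_sum_one_sub_tvDist_le_sum_lintegral hρsymm hρmeas hτ.le hα hsep htri
          hest
  obtain ⟨e, -, he⟩ := exists_le_of_sum_le univ_nonempty hrisk
  exact ⟨e, he⟩

/-- a corollary of Assouad's lemma, with the total-variation term averaged
over coordinate flips: the maximum risk is lower bounded by
`(dτ/(2α))·[1 − ((1/d)·Σᵢ 2^{−d} Σ_e TV(P_e, P_{ē^i})²)^{1/2}]`. -/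
theorem assouad_corollary {X Θ' : Type*} [MeasurableSpace X] [MeasurableSpace Θ']
    (ρ : Θ' × Θ' → ℝ) (hρ0 : ∀ p, 0 ≤ ρ p) (hρsymm : ∀ a b, ρ (a, b) = ρ (b, a))
    (hρmeas : Measurable ρ)
    (d : ℕ) (hd : 1 ≤ d)
    (P : (Fin d → Bool) → Measure X) (hP : ∀ e, IsProbabilityMeasure (P e))
    (θv : (Fin d → Bool) → Θ') (τ α : ℝ) (hα : 0 < α)
    (hsep : ∀ u v : Fin d → Bool,
      2 * τ * ((Finset.univ.filter fun i => u i ≠ v i).card : ℝ) ≤ ρ (θv u, θv v))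
    (htri : ∀ (u v : Fin d → Bool) (t : Θ'),
      ρ (θv u, θv v) ≤ α * (ρ (θv u, t) + ρ (θv v, t)))
    (est : X → Θ') (hest : Measurable est) :
    ∃ e : Fin d → Bool,
      ENNReal.ofReal
          (((d:ℝ) * τ / (2 * α)) *
            (1 - Real.sqrt ((1/(d:ℝ)) * ∑ i : Fin d, ((2:ℝ)^d)⁻¹ *
              ∑ e : Fin d → Bool,
                (tvDist (P e) (P (Function.update e i (!(e i)))))^2))) ≤
        ∫⁻ x, ENNReal.ofReal (ρ (est x, θv e)) ∂(P e) :=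
  assouad_corollary_general ρ hρsymm hρmeas d P hP θv τ α hα hsep htri est hest
end

section
/- Let d, n ≥ 1, L, B > 0, ε > 0, let x₁,…,x_n ∈ ℝ^d satisfy ‖xᵢ‖₂ ≤ 2L, and let ỹ₁,…,ỹ_n ∈ {0,1} be arbitrary fixed labels. Then the debiased loss l̂ : ℝ^d → ℝ is differentiable, and for all θ, θ′ ∈ Θ_B, l̂(θ′) ≥ l̂(θ) + ⟨∇l̂(θ), θ′−θ⟩ + (γ·(2σ(ε)−1)/2)·Σ_{i=1}^n (xᵢᵀ(θ′−θ))², where γ = 1/(2 + e^{−2LB} + e^{2LB}); i.e., l̂ is γ(2σ(ε)−1)-strongly convex on Θ_B with respect to the semi-norm v ↦ √(Σᵢ (xᵢᵀv)²), for every privacy level ε > 0. -/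
open MeasureTheory Real

/-- The sigmoid function `σ(z) = 1/(1+e^{−z})`. -/
noncomputable def sigmoid (z : ℝ) : ℝ := 1 / (1 + Real.exp (-z))

/-- The parameter set `Θ_B = {θ ∈ ℝ^d : ⟨1, θ⟩ = 0, ‖θ‖ ≤ B}`. -/
def Theta (d : ℕ) (B : ℝ) : Set (EuclideanSpace ℝ (Fin d)) :=
  {θ | (∑ j, θ j) = 0 ∧ ‖θ‖ ≤ B}

/-- `γ = 1/(2 + e^{−2LB} + e^{2LB})`. -/
noncomputable def gammaLB (L B : ℝ) : ℝ :=
  1 / (2 + Real.exp (-(2*L*B)) + Real.exp (2*L*B))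

/-- The debiased loss `l̂`, tailored to randomized response. -/
noncomputable def debiasedLoss (d n : ℕ) (ε : ℝ) (x : Fin n → EuclideanSpace ℝ (Fin d))
    (y : Fin n → Bool) (θ : EuclideanSpace ℝ (Fin d)) : ℝ :=
  -∑ i, (if y i then
      _root_.sigmoid ε * Real.log (_root_.sigmoid (inner ℝ (x i) θ))
        - (1 - _root_.sigmoid ε) * Real.log (1 - _root_.sigmoid (inner ℝ (x i) θ))
    else
      _root_.sigmoid ε * Real.log (1 - _root_.sigmoid (inner ℝ (x i) θ))
        - (1 - _root_.sigmoid ε) * Real.log (_root_.sigmoid (inner ℝ (x i) θ)))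

/-! Up to terms linear in `θ`, each summand of `l̂` is `(2σ(ε) - 1) ℓ(xᵢᵀθ)` with the logistic
loss `ℓ(u) = -log σ(u)` (use `log (1 - σ u) = log σ u - u`). Since `ℓ'' = σ (1 - σ) = 1 / (2 + 2 cosh)`
and `|xᵢᵀθ| ≤ 2LB` on `Θ_B` by Cauchy–Schwarz, `ℓ'' ≥ γ` on the relevant range, and a function of
one variable whose second derivative is at least `m` on an interval lies above its tangent plus
`m/2` times the squared increment. Summing over `i` gives the claim. -/

open scoped RealInnerProductSpace

theorem ConvexOn.add_mul_sub_le_of_hasDerivAt {S : Set ℝ} {f : ℝ → ℝ} {x y f' : ℝ}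
    (hf : ConvexOn ℝ S f) (hx : x ∈ S) (hy : y ∈ S) (hf' : HasDerivAt f f' x) :
    f x + f' * (y - x) ≤ f y := by
  rcases lt_trichotomy x y with hxy | rfl | hxy
  · have h := hf.le_slope_of_hasDerivAt hx hy hxy hf'
    rw [slope_def_field, le_div_iff₀ (sub_pos.2 hxy)] at h
    linarith
  · simp
  · have h := hf.slope_le_of_hasDerivAt hy hx hxy hf'
    rw [slope_def_field, div_le_iff₀ (sub_pos.2 hxy)] at h
    linarith

theorem add_mul_sub_add_sq_le_of_le_deriv2 {D : Set ℝ} (hD : Convex ℝ D) {f f' f'' : ℝ → ℝ}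
    {m : ℝ} (hf : ∀ t, HasDerivAt f (f' t) t) (hf' : ∀ t, HasDerivAt f' (f'' t) t)
    (hm : ∀ t ∈ interior D, m ≤ f'' t) {x y : ℝ} (hx : x ∈ D) (hy : y ∈ D) :
    f x + f' x * (y - x) + m / 2 * (y - x) ^ 2 ≤ f y := by
  have hg : ∀ t, HasDerivAt (fun t => f t - m / 2 * t ^ 2) (f' t - m * t) t := fun t => by
    refine ((hf t).fun_sub ((hasDerivAt_pow 2 t).const_mul (m / 2))).congr_deriv ?_
    norm_num
    ring
  have hg' : ∀ t, HasDerivAt (fun t => f' t - m * t) (f'' t - m) t := fun t => by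
    simpa using (hf' t).fun_sub ((hasDerivAt_id t).const_mul m)
  have hconv : ConvexOn ℝ D fun t => f t - m / 2 * t ^ 2 :=
    convexOn_of_hasDerivWithinAt2_nonneg hD (fun t _ => (hg t).continuousAt.continuousWithinAt)
      (fun t _ => (hg t).hasDerivWithinAt) (fun t _ => (hg' t).hasDerivWithinAt)
      fun t ht => sub_nonneg.2 (hm t ht)
  linear_combination hconv.add_mul_sub_le_of_hasDerivAt hx hy (hg x)

section SumCompInner

variable {E ι : Type*} [NormedAddCommGroup E] [InnerProductSpace ℝ E] [Fintype ι] {x : ι → E}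
  {φ φ' : ι → ℝ → ℝ}

theorem hasFDerivAt_sum_comp_inner (hφ : ∀ i u, HasDerivAt (φ i) (φ' i u) u) (θ : E) :
    HasFDerivAt (fun θ => ∑ i, φ i ⟪x i, θ⟫) (∑ i, φ' i ⟪x i, θ⟫ • innerSL ℝ (x i)) θ :=
  HasFDerivAt.fun_sum fun i _ => (hφ i _).comp_hasFDerivAt θ (innerSL ℝ (x i)).hasFDerivAt

theorem inner_gradient_sum_comp_inner [CompleteSpace E] (hφ : ∀ i u, HasDerivAt (φ i) (φ' i u) u)
    (θ v : E) :
    ⟪gradient (fun θ => ∑ i, φ i ⟪x i, θ⟫) θ, v⟫ = ∑ i, φ' i ⟪x i, θ⟫ * ⟪x i, v⟫ := by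
  rw [gradient, InnerProductSpace.toDual_symm_apply, (hasFDerivAt_sum_comp_inner hφ θ).fderiv]
  simp

theorem sum_comp_inner_add_inner_gradient_add_sq_le [CompleteSpace E]
    (hφ : ∀ i u, HasDerivAt (φ i) (φ' i u) u) {m : ℝ} {θ θ' : E}
    (hφm : ∀ i, φ i ⟪x i, θ⟫ + φ' i ⟪x i, θ⟫ * (⟪x i, θ'⟫ - ⟪x i, θ⟫)
      + m / 2 * (⟪x i, θ'⟫ - ⟪x i, θ⟫) ^ 2 ≤ φ i ⟪x i, θ'⟫) :
    ∑ i, φ i ⟪x i, θ⟫ + ⟪gradient (fun θ => ∑ i, φ i ⟪x i, θ⟫) θ, θ' - θ⟫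
      + m / 2 * ∑ i, ⟪x i, θ' - θ⟫ ^ 2 ≤ ∑ i, φ i ⟪x i, θ'⟫ := by
  simp only [inner_gradient_sum_comp_inner hφ, inner_sub_right, Finset.mul_sum,
    ← Finset.sum_add_distrib]
  exact Finset.sum_le_sum fun i _ => hφm i

end SumCompInner

theorem sigmoid_eq_real_sigmoid : _root_.sigmoid = Real.sigmoid :=
  funext fun _ => one_div _

namespace Real

theorem sigmoid_mul_one_sub_sigmoid (u : ℝ) :
    sigmoid u * (1 - sigmoid u) = 1 / (2 + 2 * cosh u) := by
  rw [← sigmoid_neg, sigmoid_def, sigmoid_def, cosh_eq, neg_neg, exp_neg]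
  field_simp
  ring

theorem one_div_two_add_two_cosh_le_sigmoid_mul_one_sub_sigmoid {s u : ℝ} (hu : |u| ≤ s) :
    1 / (2 + 2 * cosh s) ≤ sigmoid u * (1 - sigmoid u) := by
  rw [sigmoid_mul_one_sub_sigmoid]
  gcongr
  exact cosh_le_cosh.2 (hu.trans (le_abs_self s))

noncomputable def logisticLoss (u : ℝ) : ℝ := -log (sigmoid u)

theorem hasDerivAt_logisticLoss (u : ℝ) : HasDerivAt logisticLoss (sigmoid u - 1) u := by
  refine ((hasDerivAt_sigmoid u).log (sigmoid_pos u).ne').neg.congr_deriv ?_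
  field_simp [(sigmoid_pos u).ne']
  ring

theorem logisticLoss_add_mul_sub_add_sq_le {s u v : ℝ} (hu : |u| ≤ s) (hv : |v| ≤ s) :
    logisticLoss u + (sigmoid u - 1) * (v - u) + 1 / (2 + 2 * cosh s) / 2 * (v - u) ^ 2
      ≤ logisticLoss v :=
  add_mul_sub_add_sq_le_of_le_deriv2 (convex_Icc (-s) s) hasDerivAt_logisticLoss
    (fun t => (hasDerivAt_sigmoid t).sub_const 1)
    (fun _ ht => one_div_two_add_two_cosh_le_sigmoid_mul_one_sub_sigmoid
      (abs_le.2 (interior_subset ht :)))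
    (abs_le.1 hu) (abs_le.1 hv)

theorem log_one_sub_sigmoid (u : ℝ) : log (1 - sigmoid u) = log (sigmoid u) - u := by
  rw [← sigmoid_neg, ← sigmoid_mul_rexp_neg, log_mul (sigmoid_pos u).ne' (exp_pos _).ne', log_exp,
    sub_eq_add_neg]

noncomputable def debiasedSampleLoss (ε : ℝ) (y : Bool) (u : ℝ) : ℝ :=
  (2 * sigmoid ε - 1) * logisticLoss u + (if y then sigmoid ε - 1 else sigmoid ε) * u

theorem hasDerivAt_debiasedSampleLoss (ε : ℝ) (y : Bool) (u : ℝ) :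
    HasDerivAt (debiasedSampleLoss ε y)
      ((2 * sigmoid ε - 1) * (sigmoid u - 1) + if y then sigmoid ε - 1 else sigmoid ε) u :=
  (((hasDerivAt_logisticLoss u).const_mul _).fun_add
    ((hasDerivAt_id u).const_mul _)).congr_deriv (by ring)

theorem debiasedSampleLoss_add_mul_sub_add_sq_le {ε : ℝ} (hε : 0 ≤ ε) (y : Bool) {s u v : ℝ}
    (hu : |u| ≤ s) (hv : |v| ≤ s) :
    debiasedSampleLoss ε y u
        + ((2 * sigmoid ε - 1) * (sigmoid u - 1) + if y then sigmoid ε - 1 else sigmoid ε) * (v - u)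
        + 1 / (2 + 2 * cosh s) * (2 * sigmoid ε - 1) / 2 * (v - u) ^ 2
      ≤ debiasedSampleLoss ε y v := by
  have hc : 0 ≤ 2 * sigmoid ε - 1 := by
    linarith [sigmoid_zero ▸ sigmoid_le hε]
  unfold debiasedSampleLoss
  linear_combination (2 * sigmoid ε - 1) * logisticLoss_add_mul_sub_add_sq_le hu hv

end Real

theorem debiasedLoss_eq_sum (d n : ℕ) (ε : ℝ) (x : Fin n → EuclideanSpace ℝ (Fin d))
    (y : Fin n → Bool) :
    debiasedLoss d n ε x y = fun θ => ∑ i, debiasedSampleLoss ε (y i) ⟪x i, θ⟫ := by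
  funext θ
  rw [debiasedLoss, sigmoid_eq_real_sigmoid, ← Finset.sum_neg_distrib]
  refine Finset.sum_congr rfl fun i _ => ?_
  cases y i <;>
    simp only [log_one_sub_sigmoid, debiasedSampleLoss, logisticLoss, Bool.false_eq_true,
      if_true, if_false] <;>
    ring

theorem gammaLB_eq (L B : ℝ) : gammaLB L B = 1 / (2 + 2 * cosh (2 * L * B)) := by
  rw [gammaLB, cosh_eq]
  ring

theorem debiasedLoss_strongly_convex_general
    (d n : ℕ) (L B ε : ℝ) (x : Fin n → EuclideanSpace ℝ (Fin d)) (y : Fin n → Bool)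
    (hε : 0 < ε)
    (hx : ∀ i, ‖x i‖ ≤ 2 * L) :
    Differentiable ℝ (debiasedLoss d n ε x y) ∧
    ∀ θ ∈ Theta d B, ∀ θ' ∈ Theta d B,
      debiasedLoss d n ε x y θ
          + (inner ℝ (gradient (debiasedLoss d n ε x y) θ) (θ' - θ) : ℝ)
          + (gammaLB L B * (2 * _root_.sigmoid ε - 1) / 2) *
              ∑ i, (inner ℝ (x i) (θ' - θ) : ℝ)^2
        ≤ debiasedLoss d n ε x y θ' := by
  have hderiv i := hasDerivAt_debiasedSampleLoss ε (y i)
  rw [debiasedLoss_eq_sum, gammaLB_eq, sigmoid_eq_real_sigmoid]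
  refine ⟨fun θ => (hasFDerivAt_sum_comp_inner hderiv θ).differentiableAt, ?_⟩
  rintro θ ⟨-, hθ⟩ θ' ⟨-, hθ'⟩
  have hbound i {ζ : EuclideanSpace ℝ (Fin d)} (hζ : ‖ζ‖ ≤ B) : |⟪x i, ζ⟫| ≤ 2 * L * B :=
    (abs_real_inner_le_norm _ _).trans
      (mul_le_mul (hx i) hζ (norm_nonneg _) ((norm_nonneg _).trans (hx i)))
  exact sum_comp_inner_add_inner_gradient_add_sq_le hderiv fun i =>
    debiasedSampleLoss_add_mul_sub_add_sq_le hε.le (y i) (hbound i hθ) (hbound i hθ')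

/-- the debiased loss is differentiable and `γ(2σ(ε)−1)`-strongly convex
on `Θ_B` with respect to the semi-norm `v ↦ √(Σᵢ(xᵢᵀv)²)`, for every `ε > 0`. -/
theorem debiasedLoss_strongly_convex
    (d n : ℕ) (L B ε : ℝ) (x : Fin n → EuclideanSpace ℝ (Fin d)) (y : Fin n → Bool)
    (hd : 1 ≤ d) (hn : 1 ≤ n) (hL : 0 < L) (hB : 0 < B) (hε : 0 < ε)
    (hx : ∀ i, ‖x i‖ ≤ 2 * L) :
    Differentiable ℝ (debiasedLoss d n ε x y) ∧
    ∀ θ ∈ Theta d B, ∀ θ' ∈ Theta d B,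
      debiasedLoss d n ε x y θ
          + (inner ℝ (gradient (debiasedLoss d n ε x y) θ) (θ' - θ) : ℝ)
          + (gammaLB L B * (2 * _root_.sigmoid ε - 1) / 2) *
              ∑ i, (inner ℝ (x i) (θ' - θ) : ℝ)^2
        ≤ debiasedLoss d n ε x y θ' :=
  debiasedLoss_strongly_convex_general d n L B ε x y hε hx
end
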